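/- arXiv:2306.02745 — 4 statements merged into one kernel-verified Lean document; each statement's English description precedes it below -/
import Mathlib

section
/- Let {A_n} be a sequence of densely defined closed operators on a Hilbert space H, and A a densely defined closed operator. If Gr(A) is contained in the strong limit Γ_∞ of {Gr(A_n)}, then the strong limit Γ_∞* of {Gr(A_n*)} is contained in Gr(A*). -/
/-! For densely defined `T`, `Gr(T†)` is the orthogonal complement of the rotated `Gr(T)`:
the pairing `⟪b, x⟫ - ⟪a, y⟫` of `(a, b) ∈ Gr(Aₙ)` and `(x, y) ∈ Gr(Aₙ†)` vanishes for every
`n`. Being continuous, it still vanishes on `Γ_∞ × Γ_∞*`, and `Gr(B) ⊆ Γ_∞` then puts `Γ_∞*`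
inside `Gr(B)^⊥ = Gr(B†)`. -/

open Filter Topology
open scoped LinearPMap

/-- The strong limit of a sequence of subspaces of a topological module. -/
def strongLimit {R M : Type*} [Ring R] [AddCommGroup M] [Module R M] [TopologicalSpace M]
    (V : ℕ → Submodule R M) : Set M :=
  {x | ∃ u : ℕ → M, (∀ n, u n ∈ V n) ∧ Tendsto u atTop (𝓝 x)}

theorem strongLimit_prod_subset_of_isClosed {R M N : Type*} [Ring R] [AddCommGroup M]
    [Module R M] [TopologicalSpace M] [AddCommGroup N] [Module R N] [TopologicalSpace N]
    {V : ℕ → Submodule R M} {W : ℕ → Submodule R N} {S : Set (M × N)} (hS : IsClosed S)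
    (hVW : ∀ n, (V n : Set M) ×ˢ (W n : Set N) ⊆ S) :
    strongLimit V ×ˢ strongLimit W ⊆ S := by
  rintro ⟨x, y⟩ ⟨⟨u, hu, hux⟩, ⟨v, hv, hvy⟩⟩
  exact hS.mem_of_tendsto (hux.prodMk_nhds hvy)
    (Eventually.of_forall fun n => hVW n ⟨hu n, hv n⟩)

theorem LinearPMap.mem_graph_adjoint_iff {𝕜 E F : Type*} [RCLike 𝕜] [NormedAddCommGroup E]
    [InnerProductSpace 𝕜 E] [CompleteSpace E] [NormedAddCommGroup F] [InnerProductSpace 𝕜 F]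
    {T : E →ₗ.[𝕜] F} (hT : Dense (T.domain : Set E)) (x : F × E) :
    x ∈ T†.graph ↔ ∀ a b, (a, b) ∈ T.graph → inner 𝕜 b x.1 - inner 𝕜 a x.2 = 0 := by
  rw [LinearPMap.adjoint_graph_eq_graph_adjoint hT, Submodule.mem_adjoint_iff]

theorem stmt4_general {H : Type*} [NormedAddCommGroup H] [InnerProductSpace ℂ H] [CompleteSpace H]
    (A : ℕ → (H →ₗ.[ℂ] H)) (hAdense : ∀ n, Dense ((A n).domain : Set H))
    (B : H →ₗ.[ℂ] H) (hBdense : Dense (B.domain : Set H))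
    (h : (B.graph : Set (H × H)) ⊆ strongLimit (fun n => (A n).graph)) :
    strongLimit (fun n => ((A n)†).graph) ⊆ ((B†).graph : Set (H × H)) := by
  let S : Set ((H × H) × (H × H)) :=
    {p | inner ℂ p.1.2 p.2.1 - inner ℂ p.1.1 p.2.2 = (0 : ℂ)}
  have hS : IsClosed S := isClosed_eq (by fun_prop) continuous_const
  have hgraphs : ∀ n, ((A n).graph : Set (H × H)) ×ˢ (((A n)†).graph : Set (H × H)) ⊆ S := by
    rintro n ⟨⟨a, b⟩, x⟩ ⟨hab, hx⟩
    exact (LinearPMap.mem_graph_adjoint_iff (hAdense n) x).mp hx a b hab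
  exact fun x hx => (LinearPMap.mem_graph_adjoint_iff hBdense x).mpr fun a b hab =>
    (strongLimit_prod_subset_of_isClosed hS hgraphs ⟨h hab, hx⟩ : ((a, b), x) ∈ S)

theorem stmt4 {H : Type*} [NormedAddCommGroup H] [InnerProductSpace ℂ H] [CompleteSpace H]
    (A : ℕ → (H →ₗ.[ℂ] H)) (hAdense : ∀ n, Dense ((A n).domain : Set H))
    (hAclosed : ∀ n, IsClosed ((A n).graph : Set (H × H)))
    (B : H →ₗ.[ℂ] H) (hBdense : Dense (B.domain : Set H))
    (hBclosed : IsClosed (B.graph : Set (H × H)))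
    (h : (B.graph : Set (H × H)) ⊆ strongLimit (fun n => (A n).graph)) :
    strongLimit (fun n => ((A n)†).graph) ⊆ ((B†).graph : Set (H × H)) :=
  stmt4_general A hAdense B hBdense h
end

section
/- Let {A_n} be a sequence of densely defined closed operators and A densely defined closed. If Gr(A) ⊆ Γ_∞ and Gr(A*) ⊆ Γ_∞*, then Gr(A) = Γ_∞ and Gr(A*) = Γ_∞*. -/
/-!
Under the pairing `⟪(x, y), (u, v)⟫ = ⟪y, u⟫ - ⟪x, v⟫` on graphs, `Gr(T†)` is exactly the
annihilator `Gr(T).adjoint` of `Gr(T)`. The pairing is continuous, so annihilation passes to strong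
limits: `Γ∞*` annihilates `Γ∞`. Hence `Γ∞* ⊆ Gr(B).adjoint = Gr(B†)`, and
`Γ∞ ⊆ Gr(B†).adjoint = Gr(B).adjoint.adjoint = Gr(B)` since `Gr(B)` is closed.
-/

open Filter Topology
open scoped LinearPMap

section

variable {𝕜 E F : Type*} [RCLike 𝕜]
variable [NormedAddCommGroup E] [InnerProductSpace 𝕜 E]
variable [NormedAddCommGroup F] [InnerProductSpace 𝕜 F]

theorem Submodule.le_adjoint_adjoint (g : Submodule 𝕜 (E × F)) : g ≤ g.adjoint.adjoint := by
  intro x hx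
  rw [mem_adjoint_iff]
  intro a b hab
  have h := congrArg (starRingEnd 𝕜) ((mem_adjoint_iff g (a, b)).1 hab x.1 x.2 hx)
  simp only [map_sub, inner_conj_symm, map_zero] at h
  linear_combination -h

theorem Submodule.adjoint_adjoint_of_isClosed [CompleteSpace E] [CompleteSpace F]
    {g : Submodule 𝕜 (E × F)} (hg : IsClosed (g : Set (E × F))) : g.adjoint.adjoint = g := by
  refine le_antisymm (fun x hx => ?_) g.le_adjoint_adjoint
  -- in the Hilbert space `WithLp 2 (E × F)`, `Kᗮᗮ` is the closure of `K`
  set K := g.comap (WithLp.linearEquiv 2 𝕜 (E × F)).toLinearMap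
  have hK : IsClosed (K : Set (WithLp 2 (E × F))) :=
    hg.preimage (WithLp.prod_continuous_ofLp 2 E F)
  suffices WithLp.toLp 2 x ∈ Kᗮᗮ by
    rwa [K.orthogonal_orthogonal_eq_closure, hK.submodule_topologicalClosure_eq] at this
  intro w hw
  have hw' : (w.ofLp.2, -w.ofLp.1) ∈ g.adjoint := by
    rw [mem_adjoint_iff]
    intro a b hab
    have := hw (WithLp.toLp 2 (a, b)) hab
    simp only [WithLp.prod_inner_apply, inner_neg_right] at this ⊢
    linear_combination this
  have := (mem_adjoint_iff _ _).1 hx _ _ hw'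
  simp only [WithLp.prod_inner_apply, inner_neg_left] at this ⊢
  linear_combination -this

theorem strongLimit_subset_adjoint {V : ℕ → Submodule 𝕜 (E × F)} {W : ℕ → Submodule 𝕜 (F × E)}
    (hW : ∀ n, W n ≤ (V n).adjoint) {g : Submodule 𝕜 (E × F)}
    (hg : (g : Set (E × F)) ⊆ strongLimit V) : strongLimit W ⊆ g.adjoint := by
  rintro q ⟨v, hv, hvq⟩
  rw [SetLike.mem_coe, Submodule.mem_adjoint_iff]
  intro a b hab
  obtain ⟨u, hu, hup⟩ := hg hab
  have hlim := (hup.snd_nhds.inner (𝕜 := 𝕜) hvq.fst_nhds).sub (hup.fst_nhds.inner hvq.snd_nhds)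
  refine tendsto_nhds_unique hlim (tendsto_const_nhds.congr fun n => ?_)
  exact ((Submodule.mem_adjoint_iff _ _).1 (hW n (hv n)) _ _ (hu n)).symm

end

theorem stmt5_general {H : Type*} [NormedAddCommGroup H] [InnerProductSpace ℂ H] [CompleteSpace H]
    (A : ℕ → (H →ₗ.[ℂ] H)) (hAdense : ∀ n, Dense ((A n).domain : Set H))
    (B : H →ₗ.[ℂ] H) (hBdense : Dense (B.domain : Set H))
    (hBclosed : IsClosed (B.graph : Set (H × H)))
    (h : (B.graph : Set (H × H)) ⊆ strongLimit (fun n => (A n).graph))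
    (hadj : ((B†).graph : Set (H × H)) ⊆ strongLimit (fun n => ((A n)†).graph)) :
    (B.graph : Set (H × H)) = strongLimit (fun n => (A n).graph) ∧
      ((B†).graph : Set (H × H)) = strongLimit (fun n => ((A n)†).graph) := by
  have hA n : (A n)†.graph = (A n).graph.adjoint := (A n).adjoint_graph_eq_graph_adjoint (hAdense n)
  have hB : B†.graph = B.graph.adjoint := B.adjoint_graph_eq_graph_adjoint hBdense
  have hlim_adj : strongLimit (fun n => ((A n)†).graph) ⊆ ((B†).graph : Set (H × H)) := by
    rw [hB]
    exact strongLimit_subset_adjoint (fun n => (hA n).le) h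
  have hlim : strongLimit (fun n => (A n).graph) ⊆ (B.graph : Set (H × H)) := by
    rw [← Submodule.adjoint_adjoint_of_isClosed hBclosed, ← hB]
    exact strongLimit_subset_adjoint (fun n => hA n ▸ (A n).graph.le_adjoint_adjoint) hadj
  exact ⟨h.antisymm hlim, hadj.antisymm hlim_adj⟩

theorem stmt5 {H : Type*} [NormedAddCommGroup H] [InnerProductSpace ℂ H] [CompleteSpace H]
    (A : ℕ → (H →ₗ.[ℂ] H)) (hAdense : ∀ n, Dense ((A n).domain : Set H))
    (hAclosed : ∀ n, IsClosed ((A n).graph : Set (H × H)))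
    (B : H →ₗ.[ℂ] H) (hBdense : Dense (B.domain : Set H))
    (hBclosed : IsClosed (B.graph : Set (H × H)))
    (h : (B.graph : Set (H × H)) ⊆ strongLimit (fun n => (A n).graph))
    (hadj : ((B†).graph : Set (H × H)) ⊆ strongLimit (fun n => ((A n)†).graph)) :
    (B.graph : Set (H × H)) = strongLimit (fun n => (A n).graph) ∧
      ((B†).graph : Set (H × H)) = strongLimit (fun n => ((A n)†).graph) :=
  stmt5_general A hAdense B hBdense hBclosed h hadj
end

section
/- Let {A_n} be a sequence of densely defined closed symmetric operators and A a self-adjoint operator. Then A is the strong graph limit of the A_n (i.e. Gr(A) = Γ_∞) if and only if Gr(A) ⊆ Γ_∞. -/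
/-!
Symmetry of the `A n` passes to the limit: any two points `(φ, ψ)`, `(χ, ω)` of `Γ_∞` satisfy
`⟪ψ, χ⟫ = ⟪φ, ω⟫`. So if `Gr B ⊆ Γ_∞`, every point of `Γ_∞` is orthogonal, in this sense, to
`Gr B`, i.e. lies in `Gr B† = Gr B`.
-/

open Filter Topology
open scoped LinearPMap InnerProductSpace

/-- A partially defined operator is symmetric. -/
def IsSymmetricOp {H : Type*} [NormedAddCommGroup H] [InnerProductSpace ℂ H]
    (T : H →ₗ.[ℂ] H) : Prop :=
  ∀ x y : T.domain, ⟪T x, (y : H)⟫_ℂ = ⟪(x : H), T y⟫_ℂ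

section

variable {H : Type*} [NormedAddCommGroup H] [InnerProductSpace ℂ H]

theorem IsSymmetricOp.inner_eq_of_mem_graph {T : H →ₗ.[ℂ] H} (hT : IsSymmetricOp T)
    {p q : H × H} (hp : p ∈ T.graph) (hq : q ∈ T.graph) : ⟪p.2, q.1⟫_ℂ = ⟪p.1, q.2⟫_ℂ := by
  obtain ⟨x, hx₁, hx₂⟩ := (LinearPMap.mem_graph_iff T).mp hp
  obtain ⟨y, hy₁, hy₂⟩ := (LinearPMap.mem_graph_iff T).mp hq
  rw [← hx₁, ← hx₂, ← hy₁, ← hy₂]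
  exact hT x y

theorem inner_eq_of_mem_strongLimit_graph {A : ℕ → (H →ₗ.[ℂ] H)} (hA : ∀ n, IsSymmetricOp (A n))
    {p q : H × H} (hp : p ∈ strongLimit fun n => (A n).graph)
    (hq : q ∈ strongLimit fun n => (A n).graph) : ⟪p.2, q.1⟫_ℂ = ⟪p.1, q.2⟫_ℂ := by
  obtain ⟨u, hu, hu_lim⟩ := hp
  obtain ⟨v, hv, hv_lim⟩ := hq
  have hleft : Tendsto (fun n => ⟪(u n).2, (v n).1⟫_ℂ) atTop (𝓝 ⟪p.2, q.1⟫_ℂ) :=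
    hu_lim.snd_nhds.inner hv_lim.fst_nhds
  have hright : Tendsto (fun n => ⟪(u n).1, (v n).2⟫_ℂ) atTop (𝓝 ⟪p.1, q.2⟫_ℂ) :=
    hu_lim.fst_nhds.inner hv_lim.snd_nhds
  refine tendsto_nhds_unique ?_ hright
  exact hleft.congr fun n => (hA n).inner_eq_of_mem_graph (hu n) (hv n)

theorem IsSelfAdjoint.mem_graph_of_inner_eq [CompleteSpace H] {B : H →ₗ.[ℂ] H}
    (hB : IsSelfAdjoint B) {p : H × H} (h : ∀ q ∈ B.graph, ⟪q.2, p.1⟫_ℂ = ⟪q.1, p.2⟫_ℂ) :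
    p ∈ B.graph := by
  have hadj : B.graph = B.graph.adjoint := by
    rw [← LinearPMap.adjoint_graph_eq_graph_adjoint hB.dense_domain,
      LinearPMap.isSelfAdjoint_def.mp hB]
  rw [hadj, Submodule.mem_adjoint_iff]
  exact fun a b hab => sub_eq_zero.mpr (h (a, b) hab)

end

theorem stmt6_general {H : Type*} [NormedAddCommGroup H] [InnerProductSpace ℂ H] [CompleteSpace H]
    (A : ℕ → (H →ₗ.[ℂ] H))
    (hAsymm : ∀ n, IsSymmetricOp (A n))
    (B : H →ₗ.[ℂ] H) (hBsa : IsSelfAdjoint B) :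
    (B.graph : Set (H × H)) = strongLimit (fun n => (A n).graph) ↔
      (B.graph : Set (H × H)) ⊆ strongLimit (fun n => (A n).graph) := by
  refine ⟨Eq.subset, fun hsub => hsub.antisymm fun p hp => ?_⟩
  exact hBsa.mem_graph_of_inner_eq fun q hq =>
    inner_eq_of_mem_strongLimit_graph hAsymm (hsub hq) hp

theorem stmt6 {H : Type*} [NormedAddCommGroup H] [InnerProductSpace ℂ H] [CompleteSpace H]
    (A : ℕ → (H →ₗ.[ℂ] H)) (hAdense : ∀ n, Dense ((A n).domain : Set H))
    (hAclosed : ∀ n, IsClosed ((A n).graph : Set (H × H)))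
    (hAsymm : ∀ n, IsSymmetricOp (A n))
    (B : H →ₗ.[ℂ] H) (hBsa : IsSelfAdjoint B) :
    (B.graph : Set (H × H)) = strongLimit (fun n => (A n).graph) ↔
      (B.graph : Set (H × H)) ⊆ strongLimit (fun n => (A n).graph) :=
  stmt6_general A hAsymm B hBsa
end

section
/- Let {A_n} be densely defined closed operators and A densely defined closed, with P_n, P the orthogonal projections in H ⊕ H onto Gr(A_n), Gr(A) respectively. Then P_n → P strongly if and only if Gr(A) ⊆ Γ_∞ and Gr(A*) ⊆ Γ_∞*. -/
open Filter Topology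
open scoped LinearPMap InnerProductSpace

/-- `P` is the orthogonal projection onto the subspace `G` of `H ⊕ H`, with respect to
the direct sum inner product `⟪u, v⟫ = ⟪u.1, v.1⟫ + ⟪u.2, v.2⟫`. -/
def IsGraphOrthProj {H : Type*} [NormedAddCommGroup H] [InnerProductSpace ℂ H]
    (G : Submodule ℂ (H × H)) (P : (H × H) →L[ℂ] (H × H)) : Prop :=
  ∀ w : H × H, P w ∈ G ∧ ∀ v ∈ G, ⟪(w - P w).1, v.1⟫_ℂ + ⟪(w - P w).2, v.2⟫_ℂ = 0

/-! The graph of `T†` is the orthogonal complement of the graph of `T` in `H ⊕ H`, rotated by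
`(x, y) ↦ (y, -x)`, so the second condition says exactly that `Gr(A)ᗮ` lies in the strong limit
of the `Gr(Aₙ)ᗮ`. For orthogonal projections `Pₙ` onto subspaces `Gₙ` and `Q` onto `G`, strong
convergence `Pₙ → Q` is equivalent to `G ⊆ lim Gₙ` and `Gᗮ ⊆ lim Gₙᗮ`: the limits `Pₙ w → Q w`
and `w - Pₙ w → w - Q w` give the inclusions, and conversely if `uₙ ∈ Gₙ`, `uₙ → Q w` and
`vₙ ∈ Gₙᗮ`, `vₙ → w - Q w`, then `Pₙ w = uₙ + Pₙ (w - uₙ - vₙ)` and the `Pₙ` are contractions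
for the ℓ² norm on `H ⊕ H`. -/
section StrongLimit

variable {R M N : Type*} [Ring R] [AddCommGroup M] [Module R M] [TopologicalSpace M]
  [AddCommGroup N] [Module R N] [TopologicalSpace N]

theorem strongLimit_comap (e : M ≃L[R] N) (V : ℕ → Submodule R N) :
    strongLimit (fun n => (V n).comap (e : M →ₗ[R] N)) = e ⁻¹' strongLimit V := by
  ext x
  constructor
  · rintro ⟨u, hu, hux⟩
    exact ⟨fun n => e (u n), hu, (e.continuous.tendsto x).comp hux⟩
  · rintro ⟨u, hu, hux⟩
    refine ⟨fun n => e.symm (u n), fun n => by simpa using hu n, ?_⟩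
    have := (e.symm.continuous.tendsto (e x)).comp hux
    rwa [e.symm_apply_apply] at this

end StrongLimit

section GraphProjection

variable {H : Type*} [NormedAddCommGroup H] [InnerProductSpace ℂ H]

def l2Orthogonal (G : Submodule ℂ (H × H)) : Submodule ℂ (H × H) where
  carrier := {w | ∀ v ∈ G, ⟪w.1, v.1⟫_ℂ + ⟪w.2, v.2⟫_ℂ = 0}
  add_mem' {x y} hx hy v hv := by
    simp only [Prod.fst_add, Prod.snd_add, inner_add_left]
    linear_combination hx v hv + hy v hv
  zero_mem' v _ := by simp
  smul_mem' c x hx v hv := by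
    simp only [Prod.smul_fst, Prod.smul_snd, inner_smul_left]
    linear_combination (starRingEnd ℂ c) * hx v hv

theorem mem_l2Orthogonal {G : Submodule ℂ (H × H)} {w : H × H} :
    w ∈ l2Orthogonal G ↔ ∀ v ∈ G, ⟪w.1, v.1⟫_ℂ + ⟪w.2, v.2⟫_ℂ = 0 :=
  Iff.rfl

theorem inner_toLp_eq_zero_of_mem_l2Orthogonal {G : Submodule ℂ (H × H)} {w v : H × H}
    (hw : w ∈ l2Orthogonal G) (hv : v ∈ G) : ⟪WithLp.toLp 2 w, WithLp.toLp 2 v⟫_ℂ = 0 :=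
  hw v hv

theorem eq_zero_of_mem_l2Orthogonal_of_mem {G : Submodule ℂ (H × H)} {w : H × H}
    (hw : w ∈ l2Orthogonal G) (hG : w ∈ G) : w = 0 := by
  simpa using inner_self_eq_zero.mp (inner_toLp_eq_zero_of_mem_l2Orthogonal hw hG)

def skewSwapL : (H × H) ≃L[ℂ] (H × H) :=
  (ContinuousLinearEquiv.prodComm ℂ H H).trans
    ((ContinuousLinearEquiv.neg ℂ).prodCongr (ContinuousLinearEquiv.refl ℂ H))

@[simp]
theorem skewSwapL_apply (p : H × H) : skewSwapL p = (-p.2, p.1) := rfl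

theorem Submodule.adjoint_eq_comap_l2Orthogonal (G : Submodule ℂ (H × H)) :
    G.adjoint = (l2Orthogonal G).comap (skewSwapL (H := H) : (H × H) →ₗ[ℂ] (H × H)) := by
  ext p
  simp only [Submodule.mem_adjoint_iff, Submodule.mem_comap, mem_l2Orthogonal, Prod.forall]
  refine forall₂_congr fun a b => imp_congr_right fun _ => ?_
  rw [← map_eq_zero (starRingEnd ℂ), map_sub, inner_conj_symm, inner_conj_symm,
    LinearEquiv.coe_coe, ContinuousLinearEquiv.coe_toLinearEquiv, skewSwapL_apply, inner_neg_left,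
    neg_add_eq_sub]

theorem subset_strongLimit_adjoint_iff (G : Submodule ℂ (H × H)) (V : ℕ → Submodule ℂ (H × H)) :
    (G.adjoint : Set (H × H)) ⊆ strongLimit (fun n => (V n).adjoint) ↔
      (l2Orthogonal G : Set (H × H)) ⊆ strongLimit (fun n => l2Orthogonal (V n)) := by
  simp only [Submodule.adjoint_eq_comap_l2Orthogonal, strongLimit_comap, Submodule.comap_coe]
  exact skewSwapL.surjective.preimage_subset_preimage_iff

namespace IsGraphOrthProj

variable {G : Submodule ℂ (H × H)} {P : (H × H) →L[ℂ] (H × H)}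

theorem apply_mem (hP : IsGraphOrthProj G P) (w : H × H) : P w ∈ G := (hP w).1

theorem sub_apply_mem (hP : IsGraphOrthProj G P) (w : H × H) : w - P w ∈ l2Orthogonal G :=
  (hP w).2

theorem apply_eq_self (hP : IsGraphOrthProj G P) {w : H × H} (hw : w ∈ G) : P w = w :=
  (sub_eq_zero.mp <|
    eq_zero_of_mem_l2Orthogonal_of_mem (hP.sub_apply_mem w) (G.sub_mem hw (hP.apply_mem w))).symm

theorem apply_eq_zero (hP : IsGraphOrthProj G P) {w : H × H} (hw : w ∈ l2Orthogonal G) :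
    P w = 0 := by
  refine eq_zero_of_mem_l2Orthogonal_of_mem ?_ (hP.apply_mem w)
  simpa using (l2Orthogonal G).sub_mem hw (hP.sub_apply_mem w)

theorem norm_toLp_apply_le (hP : IsGraphOrthProj G P) (w : H × H) :
    ‖WithLp.toLp 2 (P w)‖ ≤ ‖WithLp.toLp 2 w‖ := by
  have hpyth := norm_add_sq_eq_norm_sq_add_norm_sq_of_inner_eq_zero _ _
    (inner_toLp_eq_zero_of_mem_l2Orthogonal (hP.sub_apply_mem w) (hP.apply_mem w))
  rw [← WithLp.toLp_add, sub_add_cancel] at hpyth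
  nlinarith [norm_nonneg (WithLp.toLp 2 (P w)), norm_nonneg (WithLp.toLp 2 w),
    sq_nonneg ‖WithLp.toLp 2 (w - P w)‖]

end IsGraphOrthProj

theorem tendsto_apply_of_isGraphOrthProj {ι : Type*} {l : Filter ι} {G : ι → Submodule ℂ (H × H)}
    {P : ι → (H × H) →L[ℂ] (H × H)} (hP : ∀ i, IsGraphOrthProj (G i) (P i)) {x : ι → H × H}
    (hx : Tendsto x l (𝓝 0)) : Tendsto (fun i => P i (x i)) l (𝓝 0) := by
  have hx' : Tendsto (fun i => WithLp.toLp 2 (x i)) l (𝓝 0) := by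
    simpa [Function.comp_def] using ((WithLp.prod_continuous_toLp 2 H H).tendsto 0).comp hx
  have hPx : Tendsto (fun i => WithLp.toLp 2 (P i (x i))) l (𝓝 0) :=
    squeeze_zero_norm (fun i => (hP i).norm_toLp_apply_le (x i))
      (tendsto_zero_iff_norm_tendsto_zero.mp hx')
  simpa [Function.comp_def] using ((WithLp.prod_continuous_ofLp 2 H H).tendsto 0).comp hPx

section Convergence

variable {G : ℕ → Submodule ℂ (H × H)} {P : ℕ → (H × H) →L[ℂ] (H × H)}
  {G' : Submodule ℂ (H × H)} {Q : (H × H) →L[ℂ] (H × H)}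

theorem subset_strongLimit_of_tendsto (hP : ∀ n, IsGraphOrthProj (G n) (P n))
    (hQ : IsGraphOrthProj G' Q) (hPQ : ∀ w, Tendsto (fun n => P n w) atTop (𝓝 (Q w))) :
    (G' : Set (H × H)) ⊆ strongLimit G ∧
      (l2Orthogonal G' : Set (H × H)) ⊆ strongLimit (fun n => l2Orthogonal (G n)) := by
  refine ⟨fun w hw => ⟨fun n => P n w, fun n => (hP n).apply_mem w, ?_⟩,
    fun w hw => ⟨fun n => w - P n w, fun n => (hP n).sub_apply_mem w, ?_⟩⟩
  · simpa only [hQ.apply_eq_self hw] using hPQ w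
  · simpa only [hQ.apply_eq_zero hw, sub_zero] using tendsto_const_nhds.sub (hPQ w)

theorem tendsto_of_subset_strongLimit (hP : ∀ n, IsGraphOrthProj (G n) (P n))
    (hQ : IsGraphOrthProj G' Q) (hG : (G' : Set (H × H)) ⊆ strongLimit G)
    (hG_orth : (l2Orthogonal G' : Set (H × H)) ⊆ strongLimit (fun n => l2Orthogonal (G n)))
    (w : H × H) : Tendsto (fun n => P n w) atTop (𝓝 (Q w)) := by
  obtain ⟨u, hu, hu_lim⟩ := hG (hQ.apply_mem w)
  obtain ⟨v, hv, hv_lim⟩ := hG_orth (hQ.sub_apply_mem w)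
  have hdecomp : ∀ n, P n w = u n + P n (w - u n - v n) := fun n => by
    rw [map_sub, map_sub, (hP n).apply_eq_self (hu n), (hP n).apply_eq_zero (hv n)]
    abel
  have hrest : Tendsto (fun n => w - u n - v n) atTop (𝓝 0) := by
    simpa using ((tendsto_const_nhds (x := w)).sub hu_lim).sub hv_lim
  simpa only [← hdecomp, add_zero] using hu_lim.add (tendsto_apply_of_isGraphOrthProj hP hrest)

theorem tendsto_apply_iff_subset_strongLimit (hP : ∀ n, IsGraphOrthProj (G n) (P n))
    (hQ : IsGraphOrthProj G' Q) :
    (∀ w, Tendsto (fun n => P n w) atTop (𝓝 (Q w))) ↔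
      (G' : Set (H × H)) ⊆ strongLimit G ∧
        (l2Orthogonal G' : Set (H × H)) ⊆ strongLimit (fun n => l2Orthogonal (G n)) :=
  ⟨subset_strongLimit_of_tendsto hP hQ, fun h => tendsto_of_subset_strongLimit hP hQ h.1 h.2⟩

end Convergence

end GraphProjection

theorem stmt8_general {H : Type*} [NormedAddCommGroup H] [InnerProductSpace ℂ H] [CompleteSpace H]
    (A : ℕ → (H →ₗ.[ℂ] H)) (hAdense : ∀ n, Dense ((A n).domain : Set H))
    (B : H →ₗ.[ℂ] H) (hBdense : Dense (B.domain : Set H))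
    (P : ℕ → ((H × H) →L[ℂ] (H × H))) (hP : ∀ n, IsGraphOrthProj (A n).graph (P n))
    (Q : (H × H) →L[ℂ] (H × H)) (hQ : IsGraphOrthProj B.graph Q) :
    (∀ w : H × H, Tendsto (fun n => P n w) atTop (𝓝 (Q w))) ↔
      (B.graph : Set (H × H)) ⊆ strongLimit (fun n => (A n).graph) ∧
        ((B†).graph : Set (H × H)) ⊆ strongLimit (fun n => ((A n)†).graph) := by
  have hA_adj : (fun n => (A n)†.graph) = fun n => (A n).graph.adjoint :=
    funext fun n => (A n).adjoint_graph_eq_graph_adjoint (hAdense n)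
  rw [hA_adj, B.adjoint_graph_eq_graph_adjoint hBdense, subset_strongLimit_adjoint_iff]
  exact tendsto_apply_iff_subset_strongLimit hP hQ

theorem stmt8 {H : Type*} [NormedAddCommGroup H] [InnerProductSpace ℂ H] [CompleteSpace H]
    (A : ℕ → (H →ₗ.[ℂ] H)) (hAdense : ∀ n, Dense ((A n).domain : Set H))
    (hAclosed : ∀ n, IsClosed ((A n).graph : Set (H × H)))
    (B : H →ₗ.[ℂ] H) (hBdense : Dense (B.domain : Set H))
    (hBclosed : IsClosed (B.graph : Set (H × H)))
    (P : ℕ → ((H × H) →L[ℂ] (H × H))) (hP : ∀ n, IsGraphOrthProj (A n).graph (P n))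
    (Q : (H × H) →L[ℂ] (H × H)) (hQ : IsGraphOrthProj B.graph Q) :
    (∀ w : H × H, Tendsto (fun n => P n w) atTop (𝓝 (Q w))) ↔
      (B.graph : Set (H × H)) ⊆ strongLimit (fun n => (A n).graph) ∧
        ((B†).graph : Set (H × H)) ⊆ strongLimit (fun n => ((A n)†).graph) :=
  stmt8_general A hAdense B hBdense P hP Q hQ
end
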